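/- Let G be the closed upper half-space in ℝ^d, m ≥ 1, 1 ≤ p < ∞, and let L be the Hestenes reflection extension operator with coefficients c_1, ..., c_{m+1} solving Σ_k (-k)^l c_k = 1, l = 0,...,m. Then there is a constant C(d,m) = Σ_{k=1}^{m+1} |c_k| k^m, independent of p and f, such that for every f ∈ W^m_p(G): ‖Lf‖_{W^m_p(ℝ^d)} ≤ (1 + C(d,m)) ‖f‖_{W^m_p(G)}. -/

import Mathlib

open MeasureTheory ENNReal

/-- Partial derivative in direction `i`. -/
noncomputable def pDeriv {d : ℕ} (i : Fin d) (f : (Fin d → ℝ) → ℝ) :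
    (Fin d → ℝ) → ℝ :=
  fun x => fderiv ℝ f x (Pi.single i 1)

/-- Multi-index derivative `D^α f = ∂^{α_1}_{x_1} ⋯ ∂^{α_d}_{x_d} f`. -/
noncomputable def multiDeriv {d : ℕ} (α : Fin d → ℕ) (f : (Fin d → ℝ) → ℝ) :
    (Fin d → ℝ) → ℝ :=
  (List.ofFn fun i : Fin d => (pDeriv i)^[α i]).foldr (· ∘ ·) id f

/-- Sobolev norm `‖f‖_{W^m_p(G)} = max_{|α| ≤ m} ‖D^α f‖_{L^p(G)}` (in `ℝ≥0∞`). -/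
noncomputable def sobolevNorm {d : ℕ} (m : ℕ) (p : ℝ) (G : Set (Fin d → ℝ))
    (f : (Fin d → ℝ) → ℝ) : ℝ≥0∞ :=
  ⨆ (α : Fin d → ℕ) (_ : ∑ i, α i ≤ m),
    eLpNorm (multiDeriv α f) (ENNReal.ofReal p) (volume.restrict G)

/-- Sobolev–Grand Lebesgue norm
`‖f‖_{S[m,G,ψ]} = sup_{p ∈ (a,b)} ‖f‖_{W^m_p(G)} / ψ(p)`. -/
noncomputable def sglsNorm {d : ℕ} (m : ℕ) (G : Set (Fin d → ℝ)) (a : ℝ) (b : ℝ≥0∞)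
    (ψ : ℝ → ℝ) (f : (Fin d → ℝ) → ℝ) : ℝ≥0∞ :=
  ⨆ (p : ℝ) (_ : a < p ∧ ENNReal.ofReal p < b),
    sobolevNorm m p G f / ENNReal.ofReal (ψ p)

/-- The Hestenes reflection extension operator: `Lf(x̃, x_d) = f(x̃, x_d)` for `x_d ≥ 0`
and `Lf(x̃, x_d) = ∑_{k=1}^{m+1} c_k f(x̃, -k x_d)` for `x_d < 0` (here `c : Fin (m+1) → ℝ`,
`c k` standing for `c_{k+1}`). -/
noncomputable def hestenes {d m : ℕ} (c : Fin (m + 1) → ℝ)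
    (f : (Fin (d + 1) → ℝ) → ℝ) (x : Fin (d + 1) → ℝ) : ℝ :=
  if 0 ≤ x (Fin.last d) then f x
  else ∑ k : Fin (m + 1),
    c k * f (Function.update x (Fin.last d) (-((k : ℕ) + 1 : ℝ) * x (Fin.last d)))

section Aux

variable {n : ℕ}

def LocOp (T : ((Fin n → ℝ) → ℝ) → ((Fin n → ℝ) → ℝ)) : Prop :=
  ∀ f g (U : Set (Fin n → ℝ)), IsOpen U → Set.EqOn f g U → Set.EqOn (T f) (T g) U

lemma locOp_id : LocOp (n := n) id := fun _ _ _ _ h => h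

lemma locOp_comp {T S} (hT : LocOp (n := n) T) (hS : LocOp S) : LocOp (T ∘ S) :=
  fun f g U hU h => hT _ _ U hU (hS f g U hU h)

lemma locOp_pDeriv (i : Fin n) : LocOp (pDeriv i) := by
  intro f g U hU h x hx
  have hev : f =ᶠ[nhds x] g := Filter.eventuallyEq_of_mem (hU.mem_nhds hx) h
  simp only [pDeriv, hev.fderiv_eq]

lemma locOp_iterate {T} (hT : LocOp (n := n) T) : ∀ k, LocOp (T^[k])
  | 0 => locOp_id
  | (k+1) => by
      rw [Function.iterate_succ]
      exact locOp_comp (locOp_iterate hT k) hT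

lemma locOp_foldr : ∀ (L : List (((Fin n → ℝ) → ℝ) → ((Fin n → ℝ) → ℝ))),
    (∀ T ∈ L, LocOp T) → LocOp (L.foldr (· ∘ ·) id)
  | [], _ => locOp_id
  | (T :: L), h => by
      simp only [List.foldr_cons]
      exact locOp_comp (h T (by simp)) (locOp_foldr L fun S hS => h S (by simp [hS]))

lemma multiDeriv_eqOn (α : Fin n → ℕ) {f g : (Fin n → ℝ) → ℝ} {U : Set (Fin n → ℝ)}
    (hU : IsOpen U) (h : Set.EqOn f g U) :
    Set.EqOn (multiDeriv α f) (multiDeriv α g) U := by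
  refine locOp_foldr _ ?_ f g U hU h
  intro T hT
  rw [List.mem_ofFn] at hT
  obtain ⟨i, rfl⟩ := hT
  exact locOp_iterate (locOp_pDeriv i) _

noncomputable def scaleLM (i₀ : Fin n) (r : ℝ) : (Fin n → ℝ) →L[ℝ] (Fin n → ℝ) :=
  LinearMap.toContinuousLinearMap
    (Matrix.toLin' (Matrix.diagonal (fun j => if j = i₀ then r else 1)))

lemma scaleLM_apply (i₀ : Fin n) (r : ℝ) (x : Fin n → ℝ) :
    scaleLM i₀ r x = fun j => if j = i₀ then r * x j else x j := by
  funext j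
  simp only [scaleLM, LinearMap.coe_toContinuousLinearMap', Matrix.toLin'_apply,
    Matrix.mulVec_diagonal]
  split_ifs <;> ring

lemma scaleLM_det (i₀ : Fin n) (r : ℝ) :
    LinearMap.det (Matrix.toLin' (Matrix.diagonal (fun j : Fin n => if j = i₀ then r else 1))) = r := by
  rw [LinearMap.det_toLin', Matrix.det_diagonal]
  simp [Finset.prod_ite_eq']

lemma scaleLM_eq_update (i₀ : Fin n) (r : ℝ) (x : Fin n → ℝ) :
    scaleLM i₀ r x = Function.update x i₀ (r * x i₀) := by
  rw [scaleLM_apply]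
  funext j
  rw [Function.update_apply]
  split_ifs with h
  · subst h; rfl
  · rfl

lemma scaleLM_single (i₀ j : Fin n) (r : ℝ) :
    scaleLM i₀ r (Pi.single j 1) = (if j = i₀ then r else 1) • (Pi.single j 1 : Fin n → ℝ) := by
  rw [scaleLM_apply]
  funext l
  simp only [Pi.smul_apply, smul_eq_mul, Pi.single_apply]
  split_ifs with h1 h2 h3 <;> simp_all <;> ring



def GoodOp (i₀ : Fin n) (e : ℕ) (T : ((Fin n → ℝ) → ℝ) → ((Fin n → ℝ) → ℝ)) : Prop :=
  (∀ f, ContDiff ℝ (⊤ : ℕ∞) f → ContDiff ℝ (⊤ : ℕ∞) (T f)) ∧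
  ∀ (K : ℕ) (c r : Fin K → ℝ) (f : (Fin n → ℝ) → ℝ), ContDiff ℝ (⊤ : ℕ∞) f →
    (T fun x => ∑ k, c k * f (scaleLM i₀ (r k) x))
      = fun x => ∑ k, c k * (r k) ^ e * T f (scaleLM i₀ (r k) x)

lemma goodOp_id (i₀ : Fin n) : GoodOp i₀ 0 id := by
  refine ⟨fun _ h => h, ?_⟩
  intro K c r f hf
  funext x
  simp

lemma goodOp_comp {i₀ : Fin n} {e e' : ℕ} {T S} (hT : GoodOp i₀ e T) (hS : GoodOp i₀ e' S) :
    GoodOp i₀ (e + e') (T ∘ S) := by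
  refine ⟨fun f hf => hT.1 _ (hS.1 f hf), ?_⟩
  intro K c r f hf
  have h1 := hS.2 K c r f hf
  have h2 := hT.2 K (fun k => c k * r k ^ e') r (S f) (hS.1 f hf)
  simp only [Function.comp_apply, h1]
  rw [show (fun x => ∑ k, c k * r k ^ e' * S f (scaleLM i₀ (r k) x))
      = (fun x => ∑ k, (fun k => c k * r k ^ e') k * S f (scaleLM i₀ (r k) x)) from rfl, h2]
  funext x
  refine Finset.sum_congr rfl fun k _ => ?_
  ring

lemma goodOp_pDeriv (i₀ j : Fin n) : GoodOp i₀ (if j = i₀ then 1 else 0) (pDeriv j) := by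
  constructor
  · intro f hf
    have h1 : ContDiff ℝ (⊤ : ℕ∞) (fderiv ℝ f) := hf.fderiv_right (by simp)
    exact h1.clm_apply contDiff_const
  · intro K c r f hf
    funext x
    have hdA : ∀ k : Fin K, DifferentiableAt ℝ (fun y => f (scaleLM i₀ (r k) y)) x := by
      intro k
      exact (hf.differentiable (by simp)).differentiableAt.comp x
        ((scaleLM i₀ (r k)).differentiableAt)
    have hd : ∀ k ∈ Finset.univ, DifferentiableAt ℝ
        (fun y => c k * f (scaleLM i₀ (r k) y)) x :=
      fun k _ => (hdA k).const_mul _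
    simp only [pDeriv]
    rw [fderiv_fun_sum hd, ContinuousLinearMap.sum_apply]
    refine Finset.sum_congr rfl fun k _ => ?_
    rw [fderiv_const_mul (hdA k), ContinuousLinearMap.smul_apply]
    have hcomp : fderiv ℝ (fun y => f (scaleLM i₀ (r k) y)) x
        = (fderiv ℝ f (scaleLM i₀ (r k) x)).comp (scaleLM i₀ (r k)) := by
      have := fderiv_comp (𝕜 := ℝ) x ((hf.differentiable (by simp)).differentiableAt)
        ((scaleLM i₀ (r k)).differentiableAt)
      rw [(scaleLM i₀ (r k)).fderiv] at this
      exact this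
    rw [hcomp]
    simp only [ContinuousLinearMap.coe_comp', Function.comp_apply, smul_eq_mul]
    rw [scaleLM_single, _root_.map_smul]
    simp only [smul_eq_mul]
    split_ifs with h <;> ring

lemma goodOp_iterate {i₀ : Fin n} {e : ℕ} {T} (hT : GoodOp i₀ e T) :
    ∀ k : ℕ, GoodOp i₀ (k * e) (T^[k])
  | 0 => by simpa using goodOp_id i₀
  | (k+1) => by
      rw [Function.iterate_succ]
      have := goodOp_comp (goodOp_iterate hT k) hT
      rwa [show k * e + e = (k+1) * e by ring] at this

lemma forall₂_map {α β γ : Type*} {R : β → γ → Prop} (F : α → β) (G : α → γ)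
    (h : ∀ a, R (F a) (G a)) : ∀ (l : List α), List.Forall₂ R (l.map F) (l.map G)
  | [] => List.Forall₂.nil
  | (a :: l) => List.Forall₂.cons (h a) (forall₂_map F G h l)

lemma goodOp_foldr (i₀ : Fin n) : ∀ (es : List ℕ) (L : List (((Fin n → ℝ) → ℝ) → ((Fin n → ℝ) → ℝ))),
    List.Forall₂ (GoodOp i₀) es L → GoodOp i₀ es.sum (L.foldr (· ∘ ·) id)
  | _, _, List.Forall₂.nil => by simpa using goodOp_id i₀
  | _, _, @List.Forall₂.cons _ _ _ e T es L h hs => by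
      simp only [List.foldr_cons, List.sum_cons]
      exact goodOp_comp h (goodOp_foldr i₀ es L hs)

lemma goodOp_multiDeriv (i₀ : Fin n) (α : Fin n → ℕ) : GoodOp i₀ (α i₀) (multiDeriv α) := by
  have hf2 : List.Forall₂ (GoodOp i₀)
      (List.ofFn fun i => α i * (if i = i₀ then 1 else 0))
      (List.ofFn fun i : Fin n => (pDeriv i)^[α i]) := by
    rw [List.ofFn_eq_map, List.ofFn_eq_map]
    exact forall₂_map _ _ (fun i => goodOp_iterate (goodOp_pDeriv i₀ i) (α i)) _
  have h := goodOp_foldr i₀ _ _ hf2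
  have hsum : (List.ofFn fun i => α i * (if i = i₀ then 1 else 0)).sum = α i₀ := by
    rw [List.sum_ofFn]
    simp [mul_ite, Finset.sum_ite_eq']
  rw [hsum] at h
  exact h

lemma eLpNorm_add_measure_le {X : Type*} [MeasurableSpace X] (μ ν : Measure X) (f : X → ℝ)
    {q : ℝ≥0∞} (hq1 : 1 ≤ q) (hqt : q ≠ ⊤) :
    eLpNorm f q (μ + ν) ≤ eLpNorm f q μ + eLpNorm f q ν := by
  have hq0 : q ≠ 0 := by
    intro h; rw [h] at hq1; simp at hq1
  have ht1 : 1 ≤ q.toReal := by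
    rw [← ENNReal.toReal_one]
    exact ENNReal.toReal_mono hqt hq1
  rw [eLpNorm_eq_lintegral_rpow_enorm_toReal hq0 hqt, eLpNorm_eq_lintegral_rpow_enorm_toReal hq0 hqt,
      eLpNorm_eq_lintegral_rpow_enorm_toReal hq0 hqt, lintegral_add_measure]
  exact ENNReal.rpow_add_le_add_rpow _ _ (by positivity) (by
    rw [div_le_one (by linarith)]; linarith)

lemma hyperplane_null {n : ℕ} (i₀ : Fin n) :
    (volume : Measure (Fin n → ℝ)) {x | x i₀ = 0} = 0 := by
  rw [volume_pi]
  exact Measure.pi_hyperplane _ i₀ 0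

lemma comp_scale_eLpNorm_le {n : ℕ} (i₀ : Fin n) {r : ℝ} (hr : r ≤ -1)
    {g : (Fin n → ℝ) → ℝ} (hg : Continuous g) {q : ℝ≥0∞} (hqt : q ≠ ⊤) :
    eLpNorm (fun x => g (scaleLM i₀ r x)) q (volume.restrict {x | x i₀ < 0})
      ≤ eLpNorm g q (volume.restrict {x | 0 ≤ x i₀}) := by
  have hrneg : r < 0 := by linarith
  have hdet : LinearMap.det (Matrix.toLin'
      (Matrix.diagonal (fun j : Fin n => if j = i₀ then r else 1))) = r := scaleLM_det i₀ r
  have hAc : Continuous (scaleLM i₀ r) := (scaleLM i₀ r).continuous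
  have hU : MeasurableSet {x : Fin n → ℝ | 0 < x i₀} :=
    measurableSet_lt measurable_const (measurable_pi_apply i₀)
  have hpre : (scaleLM i₀ r) ⁻¹' {x | 0 < x i₀} = {x | x i₀ < 0} := by
    ext x
    simp only [Set.mem_preimage, Set.mem_setOf_eq, scaleLM_apply, if_pos rfl, if_true]
    constructor
    · intro h
      by_contra hc
      push_neg at hc
      nlinarith
    · intro h
      nlinarith
  have hmap : Measure.map (scaleLM i₀ r) volume
      = ENNReal.ofReal |r|⁻¹ • volume := by
    have := Real.map_linearMap_volume_pi_eq_smul_volume_pi (f := Matrix.toLin'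
      (Matrix.diagonal (fun j : Fin n => if j = i₀ then r else 1))) (by rw [hdet]; linarith)
    rw [hdet, abs_inv] at this
    have hco : ⇑(scaleLM i₀ r) = ⇑(Matrix.toLin'
        (Matrix.diagonal (fun j : Fin n => if j = i₀ then r else 1))) := by
      simp [scaleLM, LinearMap.coe_toContinuousLinearMap']
    rw [hco]
    exact this
  calc eLpNorm (fun x => g (scaleLM i₀ r x)) q (volume.restrict {x | x i₀ < 0})
      = eLpNorm g q (Measure.map (scaleLM i₀ r) (volume.restrict {x | x i₀ < 0})) := by
        rw [eLpNorm_map_measure (hg.aestronglyMeasurable) (hAc.measurable.aemeasurable)]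
        rfl
    _ = eLpNorm g q ((Measure.map (scaleLM i₀ r) volume).restrict {x | 0 < x i₀}) := by
        rw [Measure.restrict_map hAc.measurable hU, hpre]
    _ = eLpNorm g q (ENNReal.ofReal |r|⁻¹ • volume.restrict {x | 0 < x i₀}) := by
        rw [hmap, Measure.restrict_smul]
    _ ≤ eLpNorm g q (volume.restrict {x | 0 < x i₀}) := by
        rw [eLpNorm_smul_measure_of_ne_top hqt, smul_eq_mul]
        have hle1 : ENNReal.ofReal |r|⁻¹ ≤ 1 := by
          rw [← ENNReal.ofReal_one]
          apply ENNReal.ofReal_le_ofReal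
          rw [abs_of_neg hrneg]
          rw [inv_le_one_iff₀]
          right; linarith
        refine le_trans (mul_le_mul_left
          (ENNReal.rpow_le_one hle1 ENNReal.toReal_nonneg) _) ?_
        rw [one_mul]
    _ ≤ eLpNorm g q (volume.restrict {x | 0 ≤ x i₀}) := by
        apply eLpNorm_mono_measure
        have hsub : {x : Fin n → ℝ | 0 < x i₀} ⊆ {x : Fin n → ℝ | 0 ≤ x i₀} :=
          fun x hx => Set.mem_setOf_eq ▸ le_of_lt hx
        exact Measure.restrict_mono hsub (le_refl _)

end Aux

set_option maxHeartbeats 1000000 in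
/-- For the Hestenes extension with coefficients solving
`∑_k (-k)^l c_k = 1`, `l = 0,...,m`, with `C(d,m) = ∑_{k=1}^{m+1} |c_k| k^m` independent of
`p` and `f`, every `f ∈ W^m_p(G)` (`G` the closed upper half-space) satisfies
`‖Lf‖_{W^m_p(ℝ^d)} ≤ (1 + C(d,m)) ‖f‖_{W^m_p(G)}`. -/
theorem hestenes_sobolev_bound {d m : ℕ} (hm : 1 ≤ m) (p : ℝ) (hp : 1 ≤ p)
    (c : Fin (m + 1) → ℝ)
    (hc : ∀ l : ℕ, l ≤ m → ∑ k : Fin (m + 1), (-((k : ℕ) + 1 : ℝ)) ^ l * c k = 1)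
    (f : (Fin (d + 1) → ℝ) → ℝ) (hf : ContDiff ℝ (⊤ : ℕ∞) f)
    (hfin : sobolevNorm m p {x : Fin (d + 1) → ℝ | 0 ≤ x (Fin.last d)} f < ⊤) :
    sobolevNorm m p Set.univ (hestenes c f)
      ≤ (1 + ENNReal.ofReal (∑ k : Fin (m + 1), |c k| * ((k : ℕ) + 1 : ℝ) ^ m)) *
        sobolevNorm m p {x : Fin (d + 1) → ℝ | 0 ≤ x (Fin.last d)} f := by
  classical
  set i₀ := Fin.last d with hi₀
  set G := {x : Fin (d + 1) → ℝ | 0 ≤ x i₀} with hG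
  set S := sobolevNorm m p G f with hS
  set C := ENNReal.ofReal (∑ k : Fin (m + 1), |c k| * ((k : ℕ) + 1 : ℝ) ^ m) with hC
  rw [sobolevNorm]
  set q := ENNReal.ofReal p with hq
  have hq1 : 1 ≤ q := by
    rw [hq, ← ENNReal.ofReal_one]; exact ENNReal.ofReal_le_ofReal hp
  have hqt : q ≠ ⊤ := by rw [hq]; exact ENNReal.ofReal_ne_top
  refine iSup₂_le fun α hα => ?_
  rw [Measure.restrict_univ]
  set r : Fin (m + 1) → ℝ := fun k => -((k : ℕ) + 1 : ℝ) with hr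
  have hrle : ∀ k, r k ≤ -1 := by
    intro k; rw [hr]; simp only [neg_le_neg_iff]
    have : (0:ℝ) ≤ (k:ℕ) := Nat.cast_nonneg _
    linarith
  set N := eLpNorm (multiDeriv α f) q (volume.restrict G) with hN
  have hNle : N ≤ S := by
    rw [hS, sobolevNorm, ← hq]
    exact le_iSup₂ (f := fun (α : Fin (d+1) → ℕ) (_ : ∑ i, α i ≤ m) =>
      eLpNorm (multiDeriv α f) q (volume.restrict G)) α hα
  have hGmeas : MeasurableSet G := measurableSet_le measurable_const (measurable_pi_apply i₀)
  have hLoOpen : IsOpen {x : Fin (d+1) → ℝ | x i₀ < 0} :=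
    isOpen_lt (continuous_apply i₀) continuous_const
  have hUOpen : IsOpen {x : Fin (d+1) → ℝ | 0 < x i₀} :=
    isOpen_lt continuous_const (continuous_apply i₀)
  have hsplit : (volume : Measure (Fin (d+1) → ℝ))
      = volume.restrict G + volume.restrict {x | x i₀ < 0} := by
    have h1 := Measure.restrict_add_restrict_compl
      (μ := (volume : Measure (Fin (d+1) → ℝ))) hGmeas
    have h2 : Gᶜ = {x : Fin (d+1) → ℝ | x i₀ < 0} := by
      ext x; simp [hG, not_le]
    rw [h2] at h1
    exact h1.symm
  have hupper : eLpNorm (multiDeriv α (hestenes c f)) q (volume.restrict G) = N := by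
    apply eLpNorm_congr_ae
    have hEq : Set.EqOn (hestenes c f) f {x : Fin (d+1) → ℝ | 0 < x i₀} := by
      intro x hx
      simp only [hestenes, ← hi₀]
      rw [if_pos (le_of_lt hx)]
    have hEq2 := multiDeriv_eqOn α hUOpen hEq
    have hb : ∀ᵐ x ∂(volume.restrict G), x i₀ ≠ 0 := by
      apply ae_restrict_of_ae
      rw [ae_iff]
      have he : {x : Fin (d+1) → ℝ | ¬ x i₀ ≠ 0} = {x | x i₀ = 0} := by ext x; simp
      rw [he]
      exact hyperplane_null i₀
    have hmem : ∀ᵐ x ∂(volume.restrict G), x ∈ G := ae_restrict_mem hGmeas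
    filter_upwards [hb, hmem] with x hx1 hx2
    exact hEq2 (lt_of_le_of_ne hx2 (Ne.symm hx1))
  have hlower : eLpNorm (multiDeriv α (hestenes c f)) q (volume.restrict {x | x i₀ < 0})
      ≤ C * N := by
    have hEq : Set.EqOn (hestenes c f)
        (fun x => ∑ k, c k * f (scaleLM i₀ (r k) x)) {x : Fin (d+1) → ℝ | x i₀ < 0} := by
      intro x hx
      simp only [hestenes, ← hi₀]
      rw [if_neg (not_le.2 hx)]
      refine Finset.sum_congr rfl fun k _ => ?_
      rw [scaleLM_eq_update]
    have hEq2 := multiDeriv_eqOn α hLoOpen hEq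
    have h1 : eLpNorm (multiDeriv α (hestenes c f)) q (volume.restrict {x | x i₀ < 0})
        = eLpNorm (multiDeriv α (fun x => ∑ k, c k * f (scaleLM i₀ (r k) x))) q
            (volume.restrict {x | x i₀ < 0}) := by
      apply eLpNorm_congr_ae
      filter_upwards [ae_restrict_mem hLoOpen.measurableSet] with x hx
      exact hEq2 hx
    rw [h1]
    have hexp := (goodOp_multiDeriv i₀ α).2 (m+1) c r f hf
    rw [hexp]
    have hDfc : Continuous (multiDeriv α f) := ((goodOp_multiDeriv i₀ α).1 f hf).continuous
    have hform : (fun x => ∑ k, c k * r k ^ (α i₀) * multiDeriv α f (scaleLM i₀ (r k) x))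
        = ∑ k : Fin (m+1), (c k * r k ^ (α i₀)) •
            (fun x => multiDeriv α f (scaleLM i₀ (r k) x)) := by
      funext x
      rw [Finset.sum_apply]
      exact Finset.sum_congr rfl fun k _ => by simp [smul_eq_mul]
    rw [hform]
    have hmeas : ∀ k ∈ Finset.univ, AEStronglyMeasurable
        ((c k * r k ^ (α i₀)) • (fun x => multiDeriv α f (scaleLM i₀ (r k) x)))
        (volume.restrict {x : Fin (d+1) → ℝ | x i₀ < 0}) := by
      intro k _
      have hcont : Continuous (fun x => (c k * r k ^ (α i₀)) *
          multiDeriv α f (scaleLM i₀ (r k) x)) :=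
        continuous_const.mul (hDfc.comp (scaleLM i₀ (r k)).continuous)
      exact hcont.aestronglyMeasurable
    refine le_trans (eLpNorm_sum_le hmeas hq1) ?_
    have hterm : ∀ k : Fin (m+1),
        eLpNorm ((c k * r k ^ (α i₀)) • (fun x => multiDeriv α f (scaleLM i₀ (r k) x))) q
          (volume.restrict {x : Fin (d+1) → ℝ | x i₀ < 0})
        ≤ ENNReal.ofReal (|c k| * ((k:ℕ)+1:ℝ) ^ m) * N := by
      intro k
      refine le_trans eLpNorm_const_smul_le ?_
      rw [Real.enorm_eq_ofReal_abs]
      have habs : |c k * r k ^ (α i₀)| ≤ |c k| * ((k:ℕ)+1:ℝ) ^ m := by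
        rw [abs_mul, abs_pow]
        have h3 : |r k| = ((k:ℕ)+1:ℝ) := by
          rw [hr]; rw [abs_of_neg (by linarith [hrle k])]; ring
        rw [h3]
        have he : α i₀ ≤ m := le_trans (Finset.single_le_sum
          (f := fun i => α i) (fun i _ => Nat.zero_le _) (Finset.mem_univ i₀)) hα
        have h4 : ((k:ℕ)+1:ℝ) ^ (α i₀) ≤ ((k:ℕ)+1:ℝ) ^ m := by
          have h5 : (0:ℝ) ≤ ((k:ℕ):ℝ) := Nat.cast_nonneg _
          apply pow_le_pow_right₀ (by linarith) he
        exact mul_le_mul_of_nonneg_left h4 (abs_nonneg _)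
      exact mul_le_mul' (ENNReal.ofReal_le_ofReal habs)
        (comp_scale_eLpNorm_le i₀ (hrle k) hDfc hqt)
    refine le_trans (Finset.sum_le_sum fun k _ => hterm k) ?_
    rw [← Finset.sum_mul]
    refine mul_le_mul' ?_ le_rfl
    rw [hC, ← ENNReal.ofReal_sum_of_nonneg (fun k _ => by positivity)]
  have hstep : eLpNorm (multiDeriv α (hestenes c f)) q volume
      ≤ eLpNorm (multiDeriv α (hestenes c f)) q (volume.restrict G)
        + eLpNorm (multiDeriv α (hestenes c f)) q (volume.restrict {x | x i₀ < 0}) := by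
    nth_rewrite 1 [hsplit]
    exact eLpNorm_add_measure_le _ _ _ hq1 hqt
  refine le_trans hstep (le_trans (add_le_add hupper.le hlower) ?_)
  rw [add_mul, one_mul]
  exact add_le_add hNle (mul_le_mul' le_rfl hNle)
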